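/- Let Ω ⊆ ℝ^N be a bounded Lipschitz domain, A a bounded vector field on the convex hull of Ω, s ∈ (0,1), p, q ≥ 1. Suppose {f_n} ⊆ W^{s,p}(Ω, ℂ) is a sequence such that both ‖f_n‖_{L^q(Ω)} and the magnetic seminorms [f_n]_{W^{s,p}_A(Ω)} are uniformly bounded. Then ‖f_n‖_{W^{s,p}(Ω)} is uniformly bounded. -/

import Mathlib

/-! The magnetic difference `mdiff A f x y = f x - e^{iθ} f y` dominates `|f x| - |f y|` (the
diamagnetic inequality). By Chebyshev, `|f|^q` stays below a level `c ≈ 2 ‖f‖_q^q / |Ω|` on a set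
`E ⊆ Ω` of at least half the measure of `Ω`, so `|f x|^p ≲ |mdiff A f x y|^p + c^{p/q}` for `y ∈ E`;
integrating over `Ω × E` and using `|x - y| ≤ diam Ω` bounds `‖f‖_p` by the magnetic seminorm
and the `L^q` norm. Then `|f x - f y| ≤ |mdiff A f x y| + ‖A‖_∞ |x - y| |f y|`, and the kernel
`|x - y|^{(1-s)p - N}` is integrable on bounded sets since `s < 1`, so the Gagliardo seminorm is
bounded by the magnetic one plus a multiple of `‖f‖_p^p`. -/

open MeasureTheory ENNReal NNReal Set
noncomputable section

abbrev Euc (N : ℕ) := EuclideanSpace ℝ (Fin N)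

/-- The magnetic phase factor `e^{i (x-y)·A((x+y)/2)}`. -/
def phase {N : ℕ} (A : Euc N → Euc N) (x y : Euc N) : ℂ :=
  Complex.exp (Complex.I * ((inner ℝ (x - y) (A ((2:ℝ)⁻¹ • (x + y))) : ℝ) : ℂ))

/-- The magnetic difference `f(x) - e^{i(x-y)·A((x+y)/2)} f(y)`. -/
def mdiff {N : ℕ} (A : Euc N → Euc N) (f : Euc N → ℂ) (x y : Euc N) : ℂ :=
  f x - phase A x y * f y

/-- Magnetic Gagliardo-type double integral over a set `H ⊆ ℝ^N × ℝ^N`. -/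
def magJ {N : ℕ} (A : Euc N → Euc N) (f : Euc N → ℂ) (H : Set (Euc N × Euc N))
    (s p : ℝ) : ℝ≥0∞ :=
  ∫⁻ z in H, (‖mdiff A f z.1 z.2‖₊ : ℝ≥0∞) ^ p / (‖z.1 - z.2‖₊ : ℝ≥0∞) ^ ((N : ℝ) + s * p)

/-- Magnetic Gagliardo seminorm `[f]_{W^{s,p}_A(Ω)}`. -/
def magSemi {N : ℕ} (A : Euc N → Euc N) (f : Euc N → ℂ) (Ω : Set (Euc N)) (s p : ℝ) : ℝ≥0∞ :=
  magJ A f (Ω ×ˢ Ω) s p ^ (1 / p)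

/-- Gagliardo seminorm `[f]_{W^{s,p}(Ω)}` (the case `A ≡ 0`). -/
def gagSemi {N : ℕ} (f : Euc N → ℂ) (Ω : Set (Euc N)) (s p : ℝ) : ℝ≥0∞ :=
  magSemi (fun _ => (0 : Euc N)) f Ω s p

/-- Membership in the fractional Sobolev space `W^{s,p}(Ω, ℂ)`. -/
def memW {N : ℕ} (f : Euc N → ℂ) (Ω : Set (Euc N)) (s p : ℝ) : Prop :=
  MemLp f (ENNReal.ofReal p) (volume.restrict Ω) ∧ gagSemi f Ω s p < ∞

/-- Full fractional Sobolev norm `‖f‖_{W^{s,p}(Ω)}`. -/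
def normW {N : ℕ} (f : Euc N → ℂ) (Ω : Set (Euc N)) (s p : ℝ) : ℝ≥0∞ :=
  (eLpNorm f (ENNReal.ofReal p) (volume.restrict Ω) ^ p + gagSemi f Ω s p ^ p) ^ (1 / p)

/-- `Ω` has Lipschitz boundary: near any boundary point, `Ω` is the region above the
graph of a Lipschitz function in some direction `v`. -/
def HasLipschitzBoundary {N : ℕ} (Ω : Set (Euc N)) : Prop :=
  ∀ a ∈ frontier Ω, ∃ U : Set (Euc N), a ∈ U ∧ IsOpen U ∧
    ∃ (v : Euc N) (φ : Euc N → ℝ) (L : ℝ≥0), ‖v‖ = 1 ∧ LipschitzWith L φ ∧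
      (∀ x : Euc N, φ x = φ (x - (inner ℝ x v : ℝ) • v)) ∧
      Ω ∩ U = {x : Euc N | φ x < (inner ℝ x v : ℝ)} ∩ U

/-- The ground state energy `E^{p,q}_{s,A}`. -/
def energy {N : ℕ} (A : Euc N → Euc N) (Ω : Set (Euc N)) (s p : ℝ) (q : ℝ≥0∞) : ℝ≥0∞ :=
  ⨅ (f : Euc N → ℂ) (_ : memW f Ω s p)
    (_ : eLpNorm f q (volume.restrict Ω) ≠ 0),
    magSemi A f Ω s p / eLpNorm f q (volume.restrict Ω)

/-- The ground state manifold `M^{p,q}_{s,A}`. -/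
def ground {N : ℕ} (A : Euc N → Euc N) (Ω : Set (Euc N)) (s p : ℝ) (q : ℝ≥0∞) :
    Set (Euc N → ℂ) :=
  {f | memW f Ω s p ∧ eLpNorm f q (volume.restrict Ω) ≠ 0 ∧
    magSemi A f Ω s p / eLpNorm f q (volume.restrict Ω) = energy A Ω s p q}

/-- `L^q` distance to the ground state manifold, `d^q_{s,A}(f)`. -/
def gdist {N : ℕ} (A : Euc N → Euc N) (Ω : Set (Euc N)) (s p : ℝ) (q : ℝ≥0∞)
    (f : Euc N → ℂ) : ℝ≥0∞ :=
  ⨅ (φ : Euc N → ℂ) (_ : φ ∈ ground A Ω s p q),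
    eLpNorm (f - φ) q (volume.restrict Ω)

theorem eLpNorm_ofReal_rpow {α E : Type*} [MeasurableSpace α] [NormedAddCommGroup E]
    {p : ℝ} (hp : 0 < p) (f : α → E) (μ : Measure α) :
    eLpNorm f (ENNReal.ofReal p) μ ^ p = ∫⁻ x, ‖f x‖ₑ ^ p ∂μ := by
  rw [eLpNorm_eq_lintegral_rpow_enorm_toReal (by simpa using hp) ofReal_ne_top,
    ENNReal.toReal_ofReal hp.le, one_div, ENNReal.rpow_inv_rpow hp.ne']

section HaarIntegrability

variable {E : Type*} [NormedAddCommGroup E] [MeasurableSpace E] [BorelSpace E] (μ : Measure E)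

open Metric in
theorem lintegral_closedBall_enorm_rpow_lt_top [NormedSpace ℝ E] [FiniteDimensional ℝ E]
    [μ.IsAddHaarMeasure] {r : ℝ}
    (hr : -(Module.finrank ℝ E : ℝ) < r) (R : ℝ) :
    ∫⁻ z in closedBall (0 : E) R, ‖z‖ₑ ^ r ∂μ < ∞ := by
  rcases le_or_gt 0 r with hr0 | hr0
  · calc ∫⁻ z in closedBall (0 : E) R, ‖z‖ₑ ^ r ∂μ
          ≤ ∫⁻ _ in closedBall (0 : E) R, ENNReal.ofReal R ^ r ∂μ := by
            refine setLIntegral_mono measurable_const fun z hz => ?_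
            gcongr
            rw [← ofReal_norm]
            exact ENNReal.ofReal_le_ofReal (mem_closedBall_zero_iff.1 hz)
      _ < ∞ := by
            rw [setLIntegral_const]
            exact ENNReal.mul_lt_top (by finiteness) measure_closedBall_lt_top
  · have hd : 1 ≤ Module.finrank ℝ E := by
      by_contra! h
      simp_all
      linarith
    have : Nontrivial E := Module.nontrivial_of_finrank_pos (R := ℝ) hd
    have hloc : LocallyIntegrable (fun z : E => ‖z‖ ^ r) μ :=
      locallyIntegrable_of_norm_le_rpow hd (C := 1) (α := -r) (by linarith)
        (ae_of_all _ fun z => by simp [Real.abs_rpow_of_nonneg])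
        (continuous_norm.measurable.pow_const r).aestronglyMeasurable
    refine lt_of_eq_of_lt (setLIntegral_congr_fun_ae measurableSet_closedBall ?_)
      (hloc.integrableOn_isCompact (isCompact_closedBall 0 R)).2
    -- at `z = 0` the extended power is `∞` while the real one is `0`; `{0}` is null
    filter_upwards [μ.ae_ne 0] with z hz _
    rw [Real.enorm_of_nonneg (by positivity), ← ofReal_norm,
      ENNReal.ofReal_rpow_of_pos (norm_pos_iff.2 hz)]

open Metric in
theorem setLIntegral_enorm_sub_rpow_le [μ.IsAddRightInvariant] {Ω : Set E}
    (hΩ : Bornology.IsBounded Ω) (r : ℝ) {y : E} (hy : y ∈ Ω) :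
    ∫⁻ x in Ω, ‖x - y‖ₑ ^ r ∂μ ≤ ∫⁻ z in closedBall (0 : E) (diam Ω), ‖z‖ₑ ^ r ∂μ := by
  have hΩy : Ω ⊆ closedBall y (diam Ω) := fun x hx => dist_le_diam_of_mem hΩ hx hy
  calc ∫⁻ x in Ω, ‖x - y‖ₑ ^ r ∂μ ≤ ∫⁻ x in closedBall y (diam Ω), ‖x - y‖ₑ ^ r ∂μ :=
        lintegral_mono' (Measure.restrict_mono hΩy le_rfl) le_rfl
    _ = ∫⁻ x, (closedBall (0 : E) (diam Ω)).indicator (‖·‖ₑ ^ r) (x - y) ∂μ := by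
        rw [← lintegral_indicator measurableSet_closedBall]
        congr 1 with x
        simp [indicator, mem_closedBall, dist_eq_norm]
    _ = ∫⁻ z in closedBall (0 : E) (diam Ω), ‖z‖ₑ ^ r ∂μ := by
        rw [lintegral_sub_right_eq_self, lintegral_indicator measurableSet_closedBall]

end HaarIntegrability

section Chebyshev

variable {α : Type*} [MeasurableSpace α] {μ : Measure α} [IsFiniteMeasure μ]

theorem measure_univ_le_two_mul_measure_lt {u : α → ℝ≥0∞} (hu : AEMeasurable u μ) {c : ℝ≥0∞}
    (hc0 : c ≠ 0) (hc : c ≠ ∞) (hu_int : 2 * ∫⁻ x, u x ∂μ ≤ c * μ univ) :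
    μ univ ≤ 2 * μ {x | u x < c} := by
  have hlarge : 2 * μ {x | c ≤ u x} ≤ μ univ :=
    calc 2 * μ {x | c ≤ u x} ≤ 2 * ((∫⁻ x, u x ∂μ) / c) := by
          gcongr; exact meas_ge_le_lintegral_div hu hc0 hc
      _ = (2 * ∫⁻ x, u x ∂μ) / c := (mul_div_assoc _ _ _).symm
      _ ≤ μ univ := ENNReal.div_le_of_le_mul' hu_int
  have hsplit : μ univ ≤ μ {x | u x < c} + μ {x | c ≤ u x} := by
    refine le_trans (measure_mono fun x _ => ?_) (measure_union_le _ _)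
    exact lt_or_ge (u x) c
  refine (ENNReal.add_le_add_iff_right (measure_ne_top μ univ)).1 ?_
  calc μ univ + μ univ = 2 * μ univ := (two_mul _).symm
    _ ≤ 2 * (μ {x | u x < c} + μ {x | c ≤ u x}) := by gcongr
    _ = 2 * μ {x | u x < c} + 2 * μ {x | c ≤ u x} := mul_add _ _ _
    _ ≤ 2 * μ {x | u x < c} + μ univ := by gcongr

theorem measure_mul_lintegral_le_lintegral_prod {u : α → ℝ≥0∞} (hu : AEMeasurable u μ)
    {E : Set α} (hE : NullMeasurableSet E μ) {F : α → α → ℝ≥0∞}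
    (hF : ∀ x, ∀ y ∈ E, u x ≤ F x y) :
    μ E * ∫⁻ x, u x ∂μ ≤ ∫⁻ z, F z.1 z.2 ∂μ.prod (μ.restrict E) := by
  have hEsnd : ∀ᵐ z ∂μ.prod (μ.restrict E), z.2 ∈ E :=
    (Measure.quasiMeasurePreserving_snd (μ := μ) (ν := μ.restrict E)).ae (ae_restrict_mem₀ hE)
  calc μ E * ∫⁻ x, u x ∂μ = ∫⁻ z, u z.1 * 1 ∂μ.prod (μ.restrict E) := by
        rw [lintegral_prod_mul hu aemeasurable_const]
        simp [mul_comm]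
    _ ≤ ∫⁻ z, F z.1 z.2 ∂μ.prod (μ.restrict E) :=
        lintegral_mono_ae (hEsnd.mono fun z hz => (mul_one (u z.1)).trans_le (hF z.1 z.2 hz))

theorem measure_univ_mul_lintegral_rpow_le {u : α → ℝ≥0∞} (hu : AEMeasurable u μ)
    {D : α → α → ℝ≥0∞} (hD : ∀ x y, u x ≤ D x y + u y) {p q : ℝ} (hp : 1 ≤ p) (hq : 0 < q)
    {c : ℝ≥0∞} (hc0 : c ≠ 0) (hc : c ≠ ∞) (hu_int : 2 * ∫⁻ x, u x ^ q ∂μ ≤ c * μ univ) :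
    μ univ * ∫⁻ x, u x ^ p ∂μ
      ≤ 2 ^ p * (∫⁻ z, D z.1 z.2 ^ p ∂μ.prod μ + c ^ (p / q) * μ univ ^ 2) := by
  set E := {y | u y ^ q < c}
  have hE : μ univ ≤ 2 * μ E :=
    measure_univ_le_two_mul_measure_lt (hu.pow_const q) hc0 hc hu_int
  have hpoint : ∀ x, ∀ y ∈ E, u x ^ p ≤ 2 ^ (p - 1) * (D x y ^ p + c ^ (p / q)) := by
    intro x y hy
    calc u x ^ p ≤ (D x y + u y) ^ p := by gcongr; exact hD x y
      _ ≤ 2 ^ (p - 1) * (D x y ^ p + u y ^ p) := ENNReal.rpow_add_le_mul_rpow_add_rpow _ _ hp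
      _ ≤ 2 ^ (p - 1) * (D x y ^ p + c ^ (p / q)) := by
          gcongr
          calc u y ^ p = (u y ^ q) ^ (p / q) := by
                rw [← ENNReal.rpow_mul, mul_div_cancel₀ _ hq.ne']
            _ ≤ c ^ (p / q) := by gcongr; exact hy.le
  have htwo : (2 : ℝ≥0∞) * 2 ^ (p - 1) = 2 ^ p := by
    conv_lhs => enter [1]; rw [← ENNReal.rpow_one 2]
    rw [← ENNReal.rpow_add _ _ two_ne_zero ofNat_ne_top, add_sub_cancel]
  calc μ univ * ∫⁻ x, u x ^ p ∂μ ≤ 2 * (μ E * ∫⁻ x, u x ^ p ∂μ) := by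
        rw [← mul_assoc]; gcongr
    _ ≤ 2 * ∫⁻ z, 2 ^ (p - 1) * (D z.1 z.2 ^ p + c ^ (p / q)) ∂μ.prod (μ.restrict E) := by
        gcongr
        exact measure_mul_lintegral_le_lintegral_prod (hu.pow_const p)
          (nullMeasurableSet_lt (hu.pow_const q) aemeasurable_const) hpoint
    _ = 2 ^ p * (∫⁻ z, D z.1 z.2 ^ p ∂μ.prod (μ.restrict E) + c ^ (p / q) * (μ univ * μ E)) := by
        rw [lintegral_const_mul' _ _ (by finiteness), lintegral_add_right _ measurable_const,
          lintegral_const, ← univ_prod_univ, Measure.prod_prod, Measure.restrict_apply_univ,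
          ← mul_assoc, htwo]
    _ ≤ 2 ^ p * (∫⁻ z, D z.1 z.2 ^ p ∂μ.prod μ + c ^ (p / q) * μ univ ^ 2) := by
        rw [sq]
        gcongr
        exacts [Measure.restrict_le_self, subset_univ E]

end Chebyshev

section Magnetic

variable {N : ℕ} (A : Euc N → Euc N) (f : Euc N → ℂ)

theorem norm_phase (x y : Euc N) : ‖phase A x y‖ = 1 := by
  simp [phase, Complex.norm_exp]

theorem norm_phase_sub_one_le (x y : Euc N) :
    ‖phase A x y - 1‖ ≤ ‖x - y‖ * ‖A ((2:ℝ)⁻¹ • (x + y))‖ :=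
  Real.norm_exp_I_mul_ofReal_sub_one_le.trans (abs_real_inner_le_norm _ _)

theorem mdiff_self (x : Euc N) : mdiff A f x x = 0 := by
  simp [mdiff, phase]

theorem mdiff_zero_field (x y : Euc N) : mdiff (fun _ => 0) f x y = f x - f y := by
  simp [mdiff, phase]

theorem enorm_le_enorm_mdiff_add (x y : Euc N) : ‖f x‖ₑ ≤ ‖mdiff A f x y‖ₑ + ‖f y‖ₑ := by
  have hphase : ‖phase A x y‖ₑ = 1 := by rw [← ofReal_norm, norm_phase, ENNReal.ofReal_one]
  calc ‖f x‖ₑ = ‖mdiff A f x y + phase A x y * f y‖ₑ := by rw [mdiff, sub_add_cancel]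
    _ ≤ ‖mdiff A f x y‖ₑ + ‖f y‖ₑ := by
        refine (enorm_add_le _ _).trans ?_
        rw [enorm_mul, hphase, one_mul]

theorem enorm_sub_le_enorm_mdiff_add (x y : Euc N) :
    ‖f x - f y‖ₑ ≤ ‖mdiff A f x y‖ₑ + ‖phase A x y - 1‖ₑ * ‖f y‖ₑ := by
  calc ‖f x - f y‖ₑ = ‖mdiff A f x y + (phase A x y - 1) * f y‖ₑ := by rw [mdiff]; ring_nf
    _ ≤ ‖mdiff A f x y‖ₑ + ‖phase A x y - 1‖ₑ * ‖f y‖ₑ := by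
        refine (enorm_add_le _ _).trans ?_
        rw [enorm_mul]

theorem magJ_eq (H : Set (Euc N × Euc N)) (s p : ℝ) :
    magJ A f H s p = ∫⁻ z in H, ‖mdiff A f z.1 z.2‖ₑ ^ p / ‖z.1 - z.2‖ₑ ^ ((N : ℝ) + s * p) :=
  rfl

theorem volume_restrict_prod (Ω : Set (Euc N)) :
    (volume : Measure (Euc N × Euc N)).restrict (Ω ×ˢ Ω)
      = (volume.restrict Ω).prod (volume.restrict Ω) := by
  rw [Measure.prod_restrict, Measure.volume_eq_prod]

variable {Ω : Set (Euc N)} {s p : ℝ}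

theorem enorm_phase_sub_one_le {M : ℝ} (hA : ∀ z ∈ convexHull ℝ Ω, ‖A z‖ ≤ M) {x y : Euc N}
    (hx : x ∈ Ω) (hy : y ∈ Ω) : ‖phase A x y - 1‖ₑ ≤ ENNReal.ofReal M * ‖x - y‖ₑ := by
  have hmid : (2:ℝ)⁻¹ • (x + y) ∈ convexHull ℝ Ω := by
    rw [smul_add]
    exact convex_convexHull ℝ Ω (subset_convexHull ℝ Ω hx) (subset_convexHull ℝ Ω hy)
      (by norm_num) (by norm_num) (by norm_num)
  rw [← ofReal_norm, ← ofReal_norm, mul_comm, ← ENNReal.ofReal_mul (norm_nonneg _)]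
  exact ENNReal.ofReal_le_ofReal ((norm_phase_sub_one_le A x y).trans (by gcongr; exact hA _ hmid))

theorem setLIntegral_enorm_mdiff_rpow_le (hΩ : MeasurableSet Ω) (hΩb : Bornology.IsBounded Ω)
    (hs : 0 ≤ s) (hp : 0 < p) :
    ∫⁻ z in Ω ×ˢ Ω, ‖mdiff A f z.1 z.2‖ₑ ^ p
      ≤ Metric.ediam Ω ^ ((N : ℝ) + s * p) * magJ A f (Ω ×ˢ Ω) s p := by
  rw [magJ_eq, ← lintegral_const_mul' _ _ (by have := hΩb.ediam_ne_top; finiteness)]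
  refine setLIntegral_mono' (hΩ.prod hΩ) fun ⟨x, y⟩ ⟨hx, hy⟩ => ?_
  rcases eq_or_ne x y with rfl | hxy
  · simp [mdiff_self, ENNReal.zero_rpow_of_pos hp]
  have hxy₀ : ‖x - y‖ₑ ≠ 0 := by simpa [sub_eq_zero] using hxy
  calc ‖mdiff A f x y‖ₑ ^ p
      = ‖mdiff A f x y‖ₑ ^ p / ‖x - y‖ₑ ^ ((N : ℝ) + s * p) * ‖x - y‖ₑ ^ ((N : ℝ) + s * p) :=
        (ENNReal.div_mul_cancel (by simp [hxy₀]) (by simp [hxy₀])).symm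
    _ ≤ Metric.ediam Ω ^ ((N : ℝ) + s * p)
          * (‖mdiff A f x y‖ₑ ^ p / ‖x - y‖ₑ ^ ((N : ℝ) + s * p)) := by
        rw [mul_comm]
        gcongr
        rw [← edist_eq_enorm_sub]
        exact Metric.edist_le_ediam_of_mem hx hy

theorem enorm_sub_rpow_div_le (hp : 1 ≤ p) {M : ℝ≥0∞} {x y : Euc N}
    (hM : ‖phase A x y - 1‖ₑ ≤ M * ‖x - y‖ₑ) :
    ‖f x - f y‖ₑ ^ p / ‖x - y‖ₑ ^ ((N : ℝ) + s * p)
      ≤ 2 ^ (p - 1) * (‖mdiff A f x y‖ₑ ^ p / ‖x - y‖ₑ ^ ((N : ℝ) + s * p)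
          + M ^ p * (‖x - y‖ₑ ^ ((1 - s) * p - N) * ‖f y‖ₑ ^ p)) := by
  have hp0 : 0 < p := by linarith
  rcases eq_or_ne x y with rfl | hxy
  · simp [ENNReal.zero_rpow_of_pos hp0]
  have hxy₀ : ‖x - y‖ₑ ≠ 0 := by simpa [sub_eq_zero] using hxy
  have hpow : ‖x - y‖ₑ ^ p / ‖x - y‖ₑ ^ ((N : ℝ) + s * p) = ‖x - y‖ₑ ^ ((1 - s) * p - N) := by
    rw [← ENNReal.rpow_sub _ _ hxy₀ enorm_ne_top]
    congr 1
    ring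
  calc ‖f x - f y‖ₑ ^ p / ‖x - y‖ₑ ^ ((N : ℝ) + s * p)
      ≤ (‖mdiff A f x y‖ₑ + M * ‖x - y‖ₑ * ‖f y‖ₑ) ^ p / ‖x - y‖ₑ ^ ((N : ℝ) + s * p) := by
        gcongr
        exact (enorm_sub_le_enorm_mdiff_add A f x y).trans (by gcongr)
    _ ≤ 2 ^ (p - 1) * (‖mdiff A f x y‖ₑ ^ p + (M * ‖x - y‖ₑ * ‖f y‖ₑ) ^ p)
          / ‖x - y‖ₑ ^ ((N : ℝ) + s * p) := by
        gcongr
        exact ENNReal.rpow_add_le_mul_rpow_add_rpow _ _ hp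
    _ = 2 ^ (p - 1) * (‖mdiff A f x y‖ₑ ^ p / ‖x - y‖ₑ ^ ((N : ℝ) + s * p)
          + M ^ p * (‖x - y‖ₑ ^ ((1 - s) * p - N) * ‖f y‖ₑ ^ p)) := by
        rw [ENNReal.mul_rpow_of_nonneg _ _ hp0.le, ENNReal.mul_rpow_of_nonneg _ _ hp0.le,
          mul_div_assoc, ENNReal.add_div, ← hpow]
        simp only [div_eq_mul_inv]
        ring

theorem setLIntegral_prod_enorm_sub_rpow_mul_le (hΩ : MeasurableSet Ω)
    (hf : AEMeasurable f (volume.restrict Ω)) {r : ℝ} {C : ℝ≥0∞}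
    (hC : ∀ y ∈ Ω, ∫⁻ x in Ω, ‖x - y‖ₑ ^ r ≤ C) :
    ∫⁻ z in Ω ×ˢ Ω, ‖z.1 - z.2‖ₑ ^ r * ‖f z.2‖ₑ ^ p ≤ C * ∫⁻ x in Ω, ‖f x‖ₑ ^ p := by
  rw [volume_restrict_prod, lintegral_prod_symm _ (by fun_prop),
    ← lintegral_const_mul'' _ (hf.enorm.pow_const p)]
  refine setLIntegral_mono_ae' hΩ (ae_of_all _ fun y hy => ?_)
  dsimp only
  rw [lintegral_mul_const'' _ (by fun_prop)]
  gcongr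
  exact hC y hy

theorem magJ_zero_field_le (hΩ : MeasurableSet Ω) (hf : AEMeasurable f (volume.restrict Ω))
    (hp : 1 ≤ p) {M C : ℝ≥0∞}
    (hM : ∀ x ∈ Ω, ∀ y ∈ Ω, ‖phase A x y - 1‖ₑ ≤ M * ‖x - y‖ₑ)
    (hC : ∀ y ∈ Ω, ∫⁻ x in Ω, ‖x - y‖ₑ ^ ((1 - s) * p - N) ≤ C) :
    magJ (fun _ => 0) f (Ω ×ˢ Ω) s p
      ≤ 2 ^ (p - 1) * (magJ A f (Ω ×ˢ Ω) s p + M ^ p * C * ∫⁻ x in Ω, ‖f x‖ₑ ^ p) := by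
  have hK : AEMeasurable (fun z : Euc N × Euc N => ‖z.1 - z.2‖ₑ ^ ((1 - s) * p - N)
      * ‖f z.2‖ₑ ^ p) (volume.restrict (Ω ×ˢ Ω)) := by
    rw [volume_restrict_prod]
    fun_prop
  calc magJ (fun _ => 0) f (Ω ×ˢ Ω) s p
      ≤ ∫⁻ z in Ω ×ˢ Ω, 2 ^ (p - 1) * (‖mdiff A f z.1 z.2‖ₑ ^ p
          / ‖z.1 - z.2‖ₑ ^ ((N : ℝ) + s * p)
          + M ^ p * (‖z.1 - z.2‖ₑ ^ ((1 - s) * p - N) * ‖f z.2‖ₑ ^ p)) := by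
        simp only [magJ_eq, mdiff_zero_field]
        exact setLIntegral_mono' (hΩ.prod hΩ) fun z hz =>
          enorm_sub_rpow_div_le A f hp (hM z.1 hz.1 z.2 hz.2)
    _ ≤ 2 ^ (p - 1) * (magJ A f (Ω ×ˢ Ω) s p + M ^ p * C * ∫⁻ x in Ω, ‖f x‖ₑ ^ p) := by
        rw [lintegral_const_mul' _ _ (by finiteness), lintegral_add_right' _ (hK.const_mul _),
          lintegral_const_mul'' _ hK, ← magJ_eq, mul_assoc (M ^ p)]
        gcongr
        exact setLIntegral_prod_enorm_sub_rpow_mul_le f hΩ hf hC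

theorem setLIntegral_enorm_rpow_le_of_magJ_le (hΩ : MeasurableSet Ω)
    (hΩb : Bornology.IsBounded Ω) (hΩ₀ : volume Ω ≠ 0) (hf : AEMeasurable f (volume.restrict Ω))
    (hs : 0 ≤ s) (hp : 1 ≤ p) {q : ℝ} (hq : 0 < q) {B₁ B₂ : ℝ≥0∞} (hB₁ : B₁ ≠ ∞)
    (hfq : eLpNorm f (ENNReal.ofReal q) (volume.restrict Ω) ≤ B₁)
    (hfA : magJ A f (Ω ×ˢ Ω) s p ≤ B₂) :
    ∫⁻ x in Ω, ‖f x‖ₑ ^ p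
      ≤ 2 ^ p * (Metric.ediam Ω ^ ((N : ℝ) + s * p) * B₂
          + (2 * (B₁ ^ q + 1) / volume Ω) ^ (p / q) * volume Ω ^ 2) / volume Ω := by
  have hΩt : volume Ω ≠ ∞ := hΩb.measure_lt_top.ne
  have : IsFiniteMeasure (volume.restrict Ω) := isFiniteMeasure_restrict.2 hΩt
  -- the `+ 1` keeps the Chebyshev level positive when `B₁ = 0`
  set c := 2 * (B₁ ^ q + 1) / volume Ω
  have hfq' : 2 * ∫⁻ x in Ω, ‖f x‖ₑ ^ q ≤ c * volume Ω := by
    rw [ENNReal.div_mul_cancel hΩ₀ hΩt, ← eLpNorm_ofReal_rpow hq]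
    gcongr 2 * ?_
    exact (ENNReal.rpow_le_rpow hfq hq.le).trans le_self_add
  have key := measure_univ_mul_lintegral_rpow_le (c := c) hf.enorm (enorm_le_enorm_mdiff_add A f)
    hp hq (by simp [c, hΩt]) (ENNReal.div_ne_top (by finiteness) hΩ₀) (by simpa using hfq')
  rw [Measure.restrict_apply_univ, ← volume_restrict_prod] at key
  rw [ENNReal.le_div_iff_mul_le (Or.inl hΩ₀) (Or.inl hΩt), mul_comm]
  refine key.trans ?_
  gcongr
  exact (setLIntegral_enorm_mdiff_rpow_le A f hΩ hΩb hs (by linarith)).trans (by gcongr)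

theorem magSemi_rpow (hp : p ≠ 0) : magSemi A f Ω s p ^ p = magJ A f (Ω ×ˢ Ω) s p := by
  rw [magSemi, one_div, ENNReal.rpow_inv_rpow hp]

end Magnetic

theorem stmt_8_general {N : ℕ} (Ω : Set (Euc N)) (hΩo : IsOpen Ω) (hΩc : IsConnected Ω)
    (hΩb : Bornology.IsBounded Ω)
    (A : Euc N → Euc N) (MA : ℝ) (hA : ∀ x ∈ convexHull ℝ Ω, ‖A x‖ ≤ MA)
    (s p q : ℝ) (hs : s ∈ Set.Ioo (0:ℝ) 1) (hp : 1 ≤ p) (hq : 1 ≤ q)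
    (f : ℕ → Euc N → ℂ) (hf : ∀ n, memW (f n) Ω s p)
    (B₁ B₂ : ℝ≥0∞) (hB₁ : B₁ ≠ ∞) (hB₂ : B₂ ≠ ∞)
    (hbd₁ : ∀ n, eLpNorm (f n) (ENNReal.ofReal q) (volume.restrict Ω) ≤ B₁)
    (hbd₂ : ∀ n, magSemi A (f n) Ω s p ≤ B₂) :
    ∃ B : ℝ≥0∞, B ≠ ∞ ∧ ∀ n, normW (f n) Ω s p ≤ B := by
  obtain ⟨hs0, hs1⟩ := hs
  have hp0 : 0 < p := by linarith
  have hmeas n : AEMeasurable (f n) (volume.restrict Ω) :=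
    (hf n).1.aestronglyMeasurable.aemeasurable
  have hJ n : magJ A (f n) (Ω ×ˢ Ω) s p ≤ B₂ ^ p :=
    magSemi_rpow A (f n) hp0.ne' ▸ ENNReal.rpow_le_rpow (hbd₂ n) hp0.le
  have hΩ₀ : volume Ω ≠ 0 := (hΩo.measure_pos volume hΩc.nonempty).ne'
  have hLp n := setLIntegral_enorm_rpow_le_of_magJ_le A (f n) hΩo.measurableSet hΩb hΩ₀
    (hmeas n) hs0.le hp (by linarith) hB₁ (hbd₁ n) (hJ n)
  set L := 2 ^ p * (Metric.ediam Ω ^ ((N : ℝ) + s * p) * B₂ ^ p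
    + (2 * (B₁ ^ q + 1) / volume Ω) ^ (p / q) * volume Ω ^ 2) / volume Ω
  set C := ∫⁻ z in Metric.closedBall (0 : Euc N) (Metric.diam Ω), ‖z‖ₑ ^ ((1 - s) * p - N)
  have hC : C ≠ ∞ := (lintegral_closedBall_enorm_rpow_lt_top volume (by simp; nlinarith) _).ne
  refine ⟨(L + 2 ^ (p - 1) * (B₂ ^ p + ENNReal.ofReal MA ^ p * C * L)) ^ (1 / p), ?_, fun n => ?_⟩
  · have := hΩb.ediam_ne_top
    have := hΩb.measure_lt_top (μ := volume).ne
    have : 2 * (B₁ ^ q + 1) / volume Ω ≠ ∞ := ENNReal.div_ne_top (by finiteness) hΩ₀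
    have : L ≠ ∞ := ENNReal.div_ne_top (by finiteness) hΩ₀
    finiteness
  rw [normW, eLpNorm_ofReal_rpow hp0, gagSemi, magSemi_rpow _ _ hp0.ne']
  gcongr
  · exact hLp n
  · refine (magJ_zero_field_le A (f n) hΩo.measurableSet (hmeas n) hp
      (fun x hx y hy => enorm_phase_sub_one_le A hA hx hy)
      (fun y hy => setLIntegral_enorm_sub_rpow_le volume hΩb _ hy)).trans ?_
    gcongr
    exacts [hJ n, hLp n]

/-- an `L^q` bound together with a magnetic seminorm bound gives a full
`W^{s,p}` norm bound, uniformly along a sequence. -/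
theorem stmt_8 {N : ℕ} (Ω : Set (Euc N)) (hΩo : IsOpen Ω) (hΩc : IsConnected Ω)
    (hΩb : Bornology.IsBounded Ω) (hΩl : HasLipschitzBoundary Ω)
    (A : Euc N → Euc N) (MA : ℝ) (hA : ∀ x ∈ convexHull ℝ Ω, ‖A x‖ ≤ MA)
    (s p q : ℝ) (hs : s ∈ Set.Ioo (0:ℝ) 1) (hp : 1 ≤ p) (hq : 1 ≤ q)
    (f : ℕ → Euc N → ℂ) (hf : ∀ n, memW (f n) Ω s p)
    (B₁ B₂ : ℝ≥0∞) (hB₁ : B₁ ≠ ∞) (hB₂ : B₂ ≠ ∞)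
    (hbd₁ : ∀ n, eLpNorm (f n) (ENNReal.ofReal q) (volume.restrict Ω) ≤ B₁)
    (hbd₂ : ∀ n, magSemi A (f n) Ω s p ≤ B₂) :
    ∃ B : ℝ≥0∞, B ≠ ∞ ∧ ∀ n, normW (f n) Ω s p ≤ B :=
  stmt_8_general Ω hΩo hΩc hΩb A MA hA s p q hs hp hq f hf B₁ B₂ hB₁ hB₂ hbd₁ hbd₂
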